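/- arXiv:math/0608240 — 3 statements merged into one kernel-verified Lean document; each statement's English description precedes it below -/
import Mathlib

section
/- Let F be a cellular automaton of radius r, n ≥ r, and x a point. If z_1 = z_1^- w z_1^+ and z_2 = z_2^- w z_2^+ both belong to B_n(x), where w = x(-n,n), then every recombination z_{(i,j)} = z_i^- w z_j^+ with i,j ∈ {1,2} also belongs to B_n(x). -/
open MeasureTheory Filter Set Topology

abbrev Config (A : Type*) := ℤ → A

def shift {A : Type*} (x : Config A) : Config A := fun i => x (i + 1)

def shiftZ {A : Type*} (m : ℤ) (x : Config A) : Config A := fun i => x (i + m)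

def hasRadius {A : Type*} (F : Config A → Config A) (r : ℕ) : Prop :=
  ∀ x y : Config A, ∀ i : ℤ, (∀ j : ℤ, |j - i| ≤ (r : ℤ) → x j = y j) → F x i = F y i

def cyl {A : Type*} (m : ℕ) (x : Config A) : Set (Config A) :=
  {y | ∀ i : ℤ, |i| ≤ (m : ℤ) → y i = x i}

def Bset {A : Type*} (F : Config A → Config A) (n : ℕ) (x : Config A) : Set (Config A) :=
  {y | ∀ k : ℕ, ∀ i : ℤ, |i| ≤ (n : ℤ) → F^[k] y i = F^[k] x i}

/-!
Split every configuration at the origin. If `w` agrees with `a` on the left half and with `b`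
on the right half, and `a`, `b` have the same central trace on `[-n, n]`, then `w` agrees with
`a` on all of `(-∞, n]`; since `r ≤ n`, one step of `F` then keeps `F w` equal to `F a` on
`(-∞, n - r] ⊇ (-∞, 0]`, and symmetrically equal to `F b` on `[0, ∞)`. By induction this
splitting persists for all times, so the central trace of `w` is that of `a`.
-/

section

variable {A : Type*} {F : Config A → Config A} {r n : ℕ}

namespace hasRadius

theorem eqOn_Iic (hF : hasRadius F r) {x y : Config A} {m : ℤ}
    (h : EqOn x y (Iic (m + r))) : EqOn (F x) (F y) (Iic m) := by
  intro i hi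
  refine hF x y i fun j hj => h ?_
  rw [mem_Iic] at hi ⊢
  linarith [le_abs_self (j - i)]

theorem eqOn_Ici (hF : hasRadius F r) {x y : Config A} {m : ℤ}
    (h : EqOn x y (Ici (m - r))) : EqOn (F x) (F y) (Ici m) := by
  intro i hi
  refine hF x y i fun j hj => h ?_
  rw [mem_Ici] at hi ⊢
  linarith [neg_abs_le (j - i)]

theorem apply_glued (hF : hasRadius F r) (hn : r ≤ n) {u a b : Config A}
    (hab : ∀ i : ℤ, |i| ≤ n → a i = b i) (hl : EqOn u a (Iic 0)) (hr : EqOn u b (Ici 0)) :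
    EqOn (F u) (F a) (Iic 0) ∧ EqOn (F u) (F b) (Ici 0) := by
  constructor
  · refine (hF.eqOn_Iic fun i (hi : i ≤ 0 + r) => ?_).mono (Iic_subset_Iic.2 (by omega))
    rcases le_total i 0 with h0 | h0
    · exact hl h0
    · exact (hr h0).trans (hab i (abs_le.2 ⟨by omega, by omega⟩)).symm
  · refine (hF.eqOn_Ici fun i (hi : 0 - r ≤ i) => ?_).mono (Ici_subset_Ici.2 (by omega))
    rcases le_total 0 i with h0 | h0
    · exact hr h0
    · exact (hl h0).trans (hab i (abs_le.2 ⟨by omega, by omega⟩))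

end hasRadius

theorem mem_Bset_comm {x y : Config A} (h : y ∈ Bset F n x) : x ∈ Bset F n y :=
  fun k i hi => (h k i hi).symm

theorem mem_Bset_trans {x y z : Config A} (hz : z ∈ Bset F n y) (hy : y ∈ Bset F n x) :
    z ∈ Bset F n x :=
  fun k i hi => (hz k i hi).trans (hy k i hi)

theorem mem_Bset_of_glued (hF : hasRadius F r) (hn : r ≤ n) {w a b : Config A}
    (hab : b ∈ Bset F n a) (hl : EqOn w a (Iic 0)) (hr : EqOn w b (Ici 0)) :
    w ∈ Bset F n a := by
  have split : ∀ k : ℕ,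
      EqOn (F^[k] w) (F^[k] a) (Iic 0) ∧ EqOn (F^[k] w) (F^[k] b) (Ici 0) := by
    intro k
    induction k with
    | zero => exact ⟨hl, hr⟩
    | succ k ih =>
      simp only [Function.iterate_succ_apply']
      exact hF.apply_glued hn (mem_Bset_comm hab k) ih.1 ih.2
  intro k i hi
  rcases le_total i 0 with h0 | h0
  · exact (split k).1 h0
  · exact ((split k).2 h0).trans (hab k i hi)

end

theorem stmt2_general {A : Type*} (F : Config A → Config A) (r n : ℕ)
    (hF : hasRadius F r) (hn : r ≤ n) (x z₁ z₂ : Config A)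
    (h1 : z₁ ∈ Bset F n x) (h2 : z₂ ∈ Bset F n x) :
    ∀ w : Config A,
      ((∀ i : ℤ, i < -(n : ℤ) → w i = z₁ i) ∨ (∀ i : ℤ, i < -(n : ℤ) → w i = z₂ i)) →
      ((∀ i : ℤ, (n : ℤ) < i → w i = z₁ i) ∨ (∀ i : ℤ, (n : ℤ) < i → w i = z₂ i)) →
      (∀ i : ℤ, |i| ≤ (n : ℤ) → w i = x i) →
      w ∈ Bset F n x := by
  intro w hL hR hw
  obtain ⟨a, ha, hLa⟩ : ∃ a ∈ Bset F n x, ∀ i : ℤ, i < -(n : ℤ) → w i = a i := by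
    rcases hL with h | h
    exacts [⟨z₁, h1, h⟩, ⟨z₂, h2, h⟩]
  obtain ⟨b, hb, hRb⟩ : ∃ b ∈ Bset F n x, ∀ i : ℤ, (n : ℤ) < i → w i = b i := by
    rcases hR with h | h
    exacts [⟨z₁, h1, h⟩, ⟨z₂, h2, h⟩]
  have center {c : Config A} (hc : c ∈ Bset F n x) (i : ℤ) (hi : |i| ≤ n) : w i = c i :=
    (hw i hi).trans (hc 0 i hi).symm
  refine mem_Bset_trans (mem_Bset_of_glued hF hn (mem_Bset_trans hb (mem_Bset_comm ha))
    (fun i (hi : i ≤ 0) => ?_) (fun i (hi : 0 ≤ i) => ?_)) ha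
  · rcases lt_or_ge i (-n) with h | h
    exacts [hLa i h, center ha i (abs_le.2 ⟨h, by omega⟩)]
  · rcases lt_or_ge (n : ℤ) i with h | h
    exacts [hRb i h, center hb i (abs_le.2 ⟨by omega, h⟩)]

/-- Recombination: if z₁ and z₂ belong to B_n(x) then any point obtained by
gluing a left tail of one of them, the central word x(-n,n), and a right tail of
one of them, also belongs to B_n(x). -/
theorem stmt2 {A : Type*} [Fintype A] (F : Config A → Config A) (r n : ℕ)
    (hF : hasRadius F r) (hn : r ≤ n) (x z₁ z₂ : Config A)
    (h1 : z₁ ∈ Bset F n x) (h2 : z₂ ∈ Bset F n x) :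
    ∀ w : Config A,
      ((∀ i : ℤ, i < -(n : ℤ) → w i = z₁ i) ∨ (∀ i : ℤ, i < -(n : ℤ) → w i = z₂ i)) →
      ((∀ i : ℤ, (n : ℤ) < i → w i = z₁ i) ∨ (∀ i : ℤ, (n : ℤ) < i → w i = z₂ i)) →
      (∀ i : ℤ, |i| ≤ (n : ℤ) → w i = x i) →
      w ∈ Bset F n x :=
  stmt2_general F r n hF hn x z₁ z₂ h1 h2
end

section
/- Let μ be a σ-ergodic, F-invariant measure for a cellular automaton F of radius r, and assume F has a μ-almost equicontinuous point x. Then for every cylinder [u]_{-p} with u = z(-p,p) for some z ∈ S(μ), there exist integers i,j ≥ 0 such that μ(C_p(z) ∩ σ^{-(i+p)}B_r(x) ∩ σ^{(j+p)}B_r(x)) > 0. -/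
open MeasureTheory Filter Set Topology

/-- The topological support of a measure. -/
def msupp {A : Type*} [TopologicalSpace A] [MeasurableSpace A]
    (μ : Measure (Config A)) : Set (Config A) :=
  {x | ∀ U : Set (Config A), IsOpen U → x ∈ U → 0 < μ U}

/-- Key step for density of periodic points: any central word of a support point
can be sandwiched between two shifted copies of B_r(x) with positive measure. -/
theorem stmt13 {A : Type*} [Fintype A] [TopologicalSpace A] [DiscreteTopology A]
    [MeasurableSpace A] [MeasurableSingletonClass A]
    (μ : Measure (Config A)) [IsProbabilityMeasure μ]
    (herg : Ergodic (shift : Config A → Config A) μ)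
    (F : Config A → Config A) (r : ℕ) (hF : hasRadius F r)
    (hinv : ∀ s : Set (Config A), MeasurableSet s → μ (F ⁻¹' s) = μ s)
    (x : Config A) (hx : 0 < μ (Bset F r x))
    (z : Config A) (hz : z ∈ msupp μ) (p : ℕ) :
    ∃ i j : ℕ, 0 < μ (cyl p z ∩ (shiftZ ((i : ℤ) + p)) ⁻¹' Bset F r x ∩
      (shiftZ (-((j : ℤ) + p))) ⁻¹' Bset F r x) := by
  classical
  -- Borel space structure
  haveI : BorelSpace A := by
    constructor
    refine MeasurableSpace.ext fun s => ⟨fun _ => ?_, fun _ => ?_⟩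
    · exact MeasurableSpace.GenerateMeasurable.basic s (isOpen_discrete s)
    · exact (Set.toFinite s).measurableSet
  -- measurability of shiftZ
  have hmsZ : ∀ m : ℤ, Measurable (shiftZ (A := A) m) := fun m =>
    measurable_pi_lambda _ fun i => measurable_pi_apply (i + m)
  -- F is measurable
  have hFc : Continuous F := by
    refine continuous_pi fun i => ?_
    rw [continuous_iff_continuousAt]
    intro y
    have hU : IsOpen {y' : Config A | ∀ j ∈ Finset.Icc (i - r) (i + r), y' j = y j} := by
      have : {y' : Config A | ∀ j ∈ Finset.Icc (i - r) (i + r), y' j = y j}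
          = ⋂ j ∈ Finset.Icc (i - r) (i + r), (fun y' : Config A => y' j) ⁻¹' {y j} := by
        ext y'; simp [Set.mem_iInter]
      rw [this]
      exact isOpen_biInter_finset fun j _ => (continuous_apply j).isOpen_preimage _
        (isOpen_discrete _)
    have hy : y ∈ {y' : Config A | ∀ j ∈ Finset.Icc (i - r) (i + r), y' j = y j} := by
      intro j _; rfl
    have : ∀ᶠ y' in nhds y, F y' i = F y i := by
      filter_upwards [hU.mem_nhds hy] with y' hy'
      refine hF y' y i fun j hj => hy' j ?_
      rw [Finset.mem_Icc]
      have := abs_le.mp hj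
      omega
    exact tendsto_nhds_of_eventually_eq this
  have hFm : Measurable F := hFc.measurable
  -- Bset is measurable
  have hBm : MeasurableSet (Bset F r x) := by
    have : Bset F r x = ⋂ (k : ℕ) (i : ℤ),
        {y : Config A | |i| ≤ (r : ℤ) → F^[k] y i = F^[k] x i} := by
      ext y; simp [Bset, Set.mem_iInter]
    rw [this]
    refine MeasurableSet.iInter fun k => MeasurableSet.iInter fun i => ?_
    by_cases h : |i| ≤ (r : ℤ)
    · have : {y : Config A | |i| ≤ (r : ℤ) → F^[k] y i = F^[k] x i}
          = (fun y : Config A => F^[k] y i) ⁻¹' {F^[k] x i} := by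
        ext y; simp [h]
      rw [this]
      exact ((measurable_pi_apply i).comp (hFm.iterate k)) (measurableSet_singleton _)
    · have : {y : Config A | |i| ≤ (r : ℤ) → F^[k] y i = F^[k] x i} = Set.univ := by
        ext y; simp [h]
      rw [this]; exact MeasurableSet.univ
  set B := Bset F r x with hB
  -- shift preimage of shifted sets
  have hkey : ∀ (m : ℤ) (s : Set (Config A)),
      shift ⁻¹' (shiftZ (A := A) m ⁻¹' s) = shiftZ (m + 1) ⁻¹' s := by
    intro m s
    ext y
    have : shiftZ m (shift y) = shiftZ (m + 1) y := by
      funext i; simp [shift, shiftZ, add_assoc]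
    simp [Set.mem_preimage, this]
  have hshiftm : Measurable (shift : Config A → Config A) :=
    measurable_pi_lambda _ fun i => measurable_pi_apply (i + 1)
  have hmp : MeasurePreserving (shift : Config A → Config A) μ μ := herg.toMeasurePreserving
  -- shiftZ is measure preserving (on measurable sets)
  have hZinv : ∀ (m : ℤ) (s : Set (Config A)), MeasurableSet s →
      μ (shiftZ m ⁻¹' s) = μ s := by
    intro m
    induction m using Int.induction_on with
    | zero => intro s _; have : shiftZ (A := A) 0 = id := by funext y i; simp [shiftZ]
              rw [this]; simp
    | succ n ih =>
        intro s hs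
        rw [← hkey n s, hmp.measure_preimage ((hmsZ n hs).nullMeasurableSet)]
        exact ih s hs
    | pred n ih =>
        intro s hs
        have h1 : shift ⁻¹' (shiftZ (A := A) (-(n : ℤ) - 1) ⁻¹' s) = shiftZ (-(n : ℤ)) ⁻¹' s := by
          have := hkey (-(n : ℤ) - 1) s
          simpa using this
        have h2 : μ (shift ⁻¹' (shiftZ (A := A) (-(n : ℤ) - 1) ⁻¹' s))
            = μ (shiftZ (A := A) (-(n : ℤ) - 1) ⁻¹' s) :=
          hmp.measure_preimage ((hmsZ _ hs).nullMeasurableSet)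
        rw [h1] at h2
        rw [← h2]
        exact ih s hs
  -- The forward union U and backward union V
  set U : Set (Config A) := ⋃ i : ℕ, shiftZ ((i : ℤ) + p) ⁻¹' B with hU
  set V : Set (Config A) := ⋃ j : ℕ, shiftZ (-((j : ℤ) + p)) ⁻¹' B with hV
  have hUm : MeasurableSet U := MeasurableSet.iUnion fun i => hmsZ _ hBm
  have hVm : MeasurableSet V := MeasurableSet.iUnion fun j => hmsZ _ hBm
  -- U is ae univ
  have hUfull : μ U = 1 := by
    have hsub : shift ⁻¹' U ⊆ U := by
      rw [hU, Set.preimage_iUnion]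
      refine Set.iUnion_subset fun i => ?_
      rw [hkey]
      exact Set.subset_iUnion_of_subset (i + 1) (by
        have : ((i : ℤ) + p) + 1 = ((i + 1 : ℕ) : ℤ) + p := by push_cast; ring
        rw [this])
    have := herg.ae_empty_or_univ_of_preimage_ae_le hUm.nullMeasurableSet
      (HasSubset.Subset.eventuallyLE hsub)
    rcases this with h | h
    · exfalso
      have hUB : μ B ≤ μ U := by
        have : shiftZ ((0 : ℤ) + p) ⁻¹' B ⊆ U := Set.subset_iUnion_of_subset 0 (by norm_num)
        calc μ B = μ (shiftZ ((0 : ℤ) + p) ⁻¹' B) := (hZinv _ _ hBm).symm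
          _ ≤ μ U := measure_mono this
      have : μ U = 0 := by
        have := measure_congr h; simpa using this
      rw [this] at hUB
      exact absurd (le_antisymm hUB (zero_le)) (ne_of_gt hx)
    · have := measure_congr h; simpa using this
  -- V is ae univ
  have hVfull : μ V = 1 := by
    have hsub : V ⊆ shift ⁻¹' V := by
      rw [hV, Set.preimage_iUnion]
      refine Set.iUnion_subset fun j => ?_
      refine Set.subset_iUnion_of_subset (j + 1) ?_
      rw [hkey]
      have : (-(((j + 1 : ℕ) : ℤ) + p)) + 1 = -((j : ℤ) + p) := by push_cast; ring
      rw [this]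
    have := herg.ae_empty_or_univ_of_ae_le_preimage hVm.nullMeasurableSet
      (HasSubset.Subset.eventuallyLE hsub)
    rcases this with h | h
    · exfalso
      have hVB : μ B ≤ μ V := by
        have : shiftZ (-((0 : ℤ) + p)) ⁻¹' B ⊆ V := Set.subset_iUnion_of_subset 0 (by norm_num)
        calc μ B = μ (shiftZ (-((0 : ℤ) + p)) ⁻¹' B) := (hZinv _ _ hBm).symm
          _ ≤ μ V := measure_mono this
      have : μ V = 0 := by
        have := measure_congr h; simpa using this
      rw [this] at hVB
      exact absurd (le_antisymm hVB (zero_le)) (ne_of_gt hx)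
    · have := measure_congr h; simpa using this
  -- cylinder has positive measure
  have hcylopen : IsOpen (cyl p z) := by
    have : cyl p z = ⋂ i ∈ Finset.Icc (-(p : ℤ)) p, (fun y : Config A => y i) ⁻¹' {z i} := by
      ext y
      simp only [cyl, Set.mem_setOf_eq, Set.mem_iInter, Set.mem_preimage,
        Set.mem_singleton_iff, Finset.mem_Icc]
      constructor
      · intro h i hi; exact h i (abs_le.mpr hi)
      · intro h i hi; exact h i (abs_le.mp hi)
    rw [this]
    exact isOpen_biInter_finset fun i _ => (continuous_apply i).isOpen_preimage _
      (isOpen_discrete _)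
  have hcylpos : 0 < μ (cyl p z) := hz (cyl p z) hcylopen (fun i _ => rfl)
  -- positive measure of triple intersection
  have hpos : 0 < μ (cyl p z ∩ U ∩ V) := by
    have h1 : μ (cyl p z ∩ U ∩ V) = μ (cyl p z) := by
      have hUae : U =ᵐ[μ] (Set.univ : Set (Config A)) := by
        rw [Filter.eventuallyEq_set]
        have : μ Uᶜ = 0 := by
          have := measure_compl hUm (measure_ne_top μ U)
          rw [hUfull] at this; simpa using this
        filter_upwards [measure_eq_zero_iff_ae_notMem.mp this] with y hy
        simp; exact not_not.mp hy
      have hVae : V =ᵐ[μ] (Set.univ : Set (Config A)) := by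
        rw [Filter.eventuallyEq_set]
        have : μ Vᶜ = 0 := by
          have := measure_compl hVm (measure_ne_top μ V)
          rw [hVfull] at this; simpa using this
        filter_upwards [measure_eq_zero_iff_ae_notMem.mp this] with y hy
        simp; exact not_not.mp hy
      have h2 : (cyl p z ∩ U ∩ V : Set (Config A)) =ᵐ[μ]
          (cyl p z ∩ Set.univ ∩ Set.univ : Set (Config A)) :=
        Filter.EventuallyEq.inter (Filter.EventuallyEq.inter
          (Filter.EventuallyEq.refl _ _) hUae) hVae
      have h3 : (cyl p z ∩ Set.univ ∩ Set.univ : Set (Config A)) = cyl p z := by simp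
      rw [h3] at h2
      exact measure_congr h2
    rw [h1]; exact hcylpos
  -- decompose into countable union
  have hdecomp : cyl p z ∩ U ∩ V ⊆ ⋃ (i : ℕ) (j : ℕ),
      (cyl p z ∩ shiftZ ((i : ℤ) + p) ⁻¹' B ∩ shiftZ (-((j : ℤ) + p)) ⁻¹' B) := by
    rintro y ⟨⟨hyc, hyU⟩, hyV⟩
    rw [hU, Set.mem_iUnion] at hyU
    rw [hV, Set.mem_iUnion] at hyV
    obtain ⟨i, hi⟩ := hyU
    obtain ⟨j, hj⟩ := hyV
    exact Set.mem_iUnion.mpr ⟨i, Set.mem_iUnion.mpr ⟨j, ⟨⟨hyc, hi⟩, hj⟩⟩⟩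
  by_contra hcon
  push_neg at hcon
  have hall : ∀ i j : ℕ,
      μ (cyl p z ∩ shiftZ ((i : ℤ) + p) ⁻¹' B ∩ shiftZ (-((j : ℤ) + p)) ⁻¹' B) = 0 := by
    intro i j
    exact le_antisymm (hcon i j) (zero_le)
  have : μ (⋃ (i : ℕ) (j : ℕ),
      (cyl p z ∩ shiftZ ((i : ℤ) + p) ⁻¹' B ∩ shiftZ (-((j : ℤ) + p)) ⁻¹' B)) = 0 := by
    refine measure_iUnion_null fun i => measure_iUnion_null fun j => hall i j
  exact hpos.ne' (le_antisymm (this ▸ measure_mono hdecomp) (zero_le))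
end

section
/- Let μ be a σ-ergodic, F-invariant measure for a cellular automaton F of radius r with a μ-almost equicontinuous point. Then F restricted to S(μ) is surjective onto S(μ), and S(μ) is both σ-invariant and F-invariant (F(S(μ)) = S(μ)). -/
/-! A continuous measure-preserving map sends the support into the support, since preimages
of null open sets are null. Conversely, on a compact space the image of the support is
closed, and its complement pulls back into the complement of the support, a null set; so the
image is conull and therefore contains the support. Both facts apply to the shift and to a
cellular automaton, which is continuous because it has finite radius. -/

open MeasureTheory Filter Set Topology

section Support

open Measure

variable {X Y : Type*} [TopologicalSpace X] [MeasurableSpace X] [TopologicalSpace Y]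
  [MeasurableSpace Y] [OpensMeasurableSpace Y] {μ : Measure X} {ν : Measure Y} {f : X → Y}

theorem MeasureTheory.MeasurePreserving.mapsTo_support (hf : MeasurePreserving f μ ν)
    (hc : Continuous f) : MapsTo f μ.support ν.support := by
  intro x hx
  rw [support_eq_forall_isOpen] at hx ⊢
  intro U hxU hU
  rw [← hf.measure_preimage hU.measurableSet.nullMeasurableSet]
  exact hx _ hxU (hU.preimage hc)

theorem MeasureTheory.MeasurePreserving.support_subset_image [HereditarilyLindelofSpace X]
    [CompactSpace X] [T2Space Y] (hf : MeasurePreserving f μ ν) (hc : Continuous f) :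
    ν.support ⊆ f '' μ.support := by
  have hclosed : IsClosed (f '' μ.support) := (isClosed_support.isCompact.image hc).isClosed
  refine support_subset_of_isClosed hclosed ?_
  rw [mem_ae_iff, ← hf.measure_preimage hclosed.isOpen_compl.measurableSet.nullMeasurableSet]
  refine measure_mono_null ?_ measure_compl_support
  rw [preimage_compl]
  exact compl_subset_compl.mpr (subset_preimage_image f _)

theorem MeasureTheory.MeasurePreserving.image_support_eq [OpensMeasurableSpace X]
    [HereditarilyLindelofSpace X] [CompactSpace X] [T2Space X] {μ : Measure X} {f : X → X}
    (hf : MeasurePreserving f μ μ) (hc : Continuous f) : f '' μ.support = μ.support :=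
  (hf.mapsTo_support hc).image_subset.antisymm (hf.support_subset_image hc)

end Support

section CellularAutomaton

variable {A : Type*} [TopologicalSpace A]

theorem msupp_eq_support [MeasurableSpace A] (μ : Measure (Config A)) :
    msupp μ = μ.support := by
  rw [Measure.support_eq_forall_isOpen]
  ext x
  exact forall_congr' fun U => imp.swap

theorem continuous_shift : Continuous (shift : Config A → Config A) :=
  continuous_pi fun i => continuous_apply (i + 1)

theorem hasRadius.continuous [DiscreteTopology A] {F : Config A → Config A} {r : ℕ}
    (hF : hasRadius F r) : Continuous F := by
  refine continuous_pi fun i => IsLocallyConstant.continuous ?_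
  refine (IsLocallyConstant.iff_exists_open _).2 fun x => ?_
  refine ⟨⋂ j ∈ Finset.Icc (i - r) (i + r), (fun y : Config A => y j) ⁻¹' {x j},
    isOpen_biInter_finset fun j _ => (isOpen_discrete {x j}).preimage (continuous_apply j),
    by simp, fun y hy => ?_⟩
  simp only [mem_iInter, mem_preimage, mem_singleton_iff, Finset.mem_Icc] at hy
  refine hF y x i fun j hj => ?_
  rw [abs_le] at hj
  exact hy j ⟨by omega, by omega⟩

end CellularAutomaton

theorem stmt19_general {A : Type*} [Fintype A] [TopologicalSpace A] [DiscreteTopology A]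
    [MeasurableSpace A] [MeasurableSingletonClass A]
    (μ : Measure (Config A))
    (herg : Ergodic (shift : Config A → Config A) μ)
    (F : Config A → Config A) (r : ℕ) (hF : hasRadius F r)
    (hinv : ∀ s : Set (Config A), MeasurableSet s → μ (F ⁻¹' s) = μ s) :
    Set.SurjOn F (msupp μ) (msupp μ) ∧
    (∀ x ∈ msupp μ, shift x ∈ msupp μ) ∧
    F '' msupp μ = msupp μ := by
  have hFc : Continuous F := hF.continuous
  have hμF : MeasurePreserving F μ μ :=
    ⟨hFc.measurable, Measure.ext fun s hs => by rw [Measure.map_apply hFc.measurable hs, hinv s hs]⟩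
  have himage := hμF.image_support_eq hFc
  rw [msupp_eq_support]
  exact ⟨himage.superset, herg.toMeasurePreserving.mapsTo_support continuous_shift, himage⟩

/-- If μ is σ-ergodic and F-invariant and F has a μ-almost equicontinuous point,
then F restricted to S(μ) is surjective onto S(μ), and S(μ) is σ-invariant and
F-invariant with F(S(μ)) = S(μ). -/
theorem stmt19 {A : Type*} [Fintype A] [TopologicalSpace A] [DiscreteTopology A]
    [MeasurableSpace A] [MeasurableSingletonClass A]
    (μ : Measure (Config A)) [IsProbabilityMeasure μ]
    (herg : Ergodic (shift : Config A → Config A) μ)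
    (F : Config A → Config A) (r : ℕ) (hF : hasRadius F r)
    (hinv : ∀ s : Set (Config A), MeasurableSet s → μ (F ⁻¹' s) = μ s)
    (heq : ∃ x : Config A, ∀ n : ℕ, r ≤ n → 0 < μ (Bset F n x)) :
    Set.SurjOn F (msupp μ) (msupp μ) ∧
    (∀ x ∈ msupp μ, shift x ∈ msupp μ) ∧
    F '' msupp μ = msupp μ :=
  stmt19_general μ herg F r hF hinv
end
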